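/- Let (V, ν, τ, τ*) be a probabilistic pseudo-normed space and C := {p ∈ V : ν_p = ε₀}. Then C is a linear subspace of V: it is closed under addition and under multiplication by arbitrary real scalars. -/

import Mathlib

open Filter Topology Set

/-- A distribution function in `Δ⁺`: nondecreasing, left-continuous,
vanishing on `(-∞,0]` and bounded by `1`. -/
structure DistFun where
  toFun : ℝ → ℝ
  mono' : Monotone toFun
  leftCont' : ∀ x, Filter.Tendsto toFun (nhdsWithin x (Set.Iio x)) (nhds (toFun x))
  zero' : ∀ x ≤ (0 : ℝ), toFun x = 0
  le_one' : ∀ x, toFun x ≤ 1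

instance : CoeFun DistFun (fun _ => ℝ → ℝ) := ⟨DistFun.toFun⟩

/-- Pointwise order on `Δ⁺`. -/
instance : LE DistFun := ⟨fun F G => ∀ x, F.toFun x ≤ G.toFun x⟩

/-- The unit step distribution function `ε_a` for `a ≥ 0`. -/
noncomputable def unitStep (a : ℝ) (_ha : 0 ≤ a) : DistFun where
  toFun x := if x ≤ a then 0 else 1
  mono' := by
    intro x y hxy
    by_cases hx : x ≤ a <;> by_cases hy : y ≤ a <;> simp [hx, hy] <;> linarith
  leftCont' := by
    intro x
    by_cases hx : x ≤ a
    · have h : (fun y => if y ≤ a then (0:ℝ) else 1) =ᶠ[nhdsWithin x (Set.Iio x)]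
          fun _ => (0:ℝ) := by
        filter_upwards [self_mem_nhdsWithin] with y hy
        exact if_pos ((le_of_lt hy).trans hx)
      simpa [if_pos hx] using (tendsto_const_nhds (α := ℝ)).congr' h.symm
    · have hax : a < x := not_le.mp hx
      have h : (fun y => if y ≤ a then (0:ℝ) else 1) =ᶠ[nhdsWithin x (Set.Iio x)]
          fun _ => (1:ℝ) := by
        filter_upwards [(eventually_gt_nhds hax).filter_mono nhdsWithin_le_nhds] with y hy
        exact if_neg (not_le.mpr hy)
      simpa [if_neg hx] using (tendsto_const_nhds (α := ℝ)).congr' h.symm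
  zero' := fun x hx => if_pos (hx.trans _ha)
  le_one' := by intro x; by_cases h : x ≤ a <;> simp [h]

/-- The maximal element `ε₀` of `Δ⁺`. -/
noncomputable def eps0 : DistFun := unitStep 0 le_rfl

/-- The one-sided Lévy condition `(F,G;h)`. -/
def levyCond (F G : DistFun) (h : ℝ) : Prop :=
  ∀ x : ℝ, -(1/h) < x → x < 1/h →
    F.toFun (x - h) - h ≤ G.toFun x ∧ G.toFun x ≤ F.toFun (x + h) + h

/-- The Sibley (modified Lévy) metric on `Δ⁺`. -/
noncomputable def sibley (F G : DistFun) : ℝ :=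
  sInf {h : ℝ | 0 < h ∧ h ≤ 1 ∧ levyCond F G h ∧ levyCond G F h}

/-- Triangle function: associative, commutative, nondecreasing binary
operation on `Δ⁺` with identity `ε₀`. -/
structure IsTriangleFun (τ : DistFun → DistFun → DistFun) : Prop where
  comm : ∀ F G, τ F G = τ G F
  assoc : ∀ F G H, τ (τ F G) H = τ F (τ G H)
  mono : ∀ F G H, F ≤ G → τ F H ≤ τ G H
  ident : ∀ F, τ F eps0 = F

/-- Continuity of a triangle function w.r.t. the Sibley metric (sequential form). -/
def TriCont (τ : DistFun → DistFun → DistFun) : Prop :=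
  ∀ (F G : ℕ → DistFun) (F₀ G₀ : DistFun),
    Filter.Tendsto (fun n => sibley (F n) F₀) Filter.atTop (nhds 0) →
    Filter.Tendsto (fun n => sibley (G n) G₀) Filter.atTop (nhds 0) →
    Filter.Tendsto (fun n => sibley (τ (F n) (G n)) (τ F₀ G₀)) Filter.atTop (nhds 0)

/-- Sup-continuity of a triangle function: `τ (sup_i F_i) G = sup_i τ (F_i) G`
(pointwise). -/
def SupCont (τ : DistFun → DistFun → DistFun) : Prop :=
  ∀ {ι : Type} [Nonempty ι] (F : ι → DistFun) (S G : DistFun),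
    (∀ x, S.toFun x = ⨆ i, (F i).toFun x) →
    ∀ x, (τ S G).toFun x = ⨆ i, (τ (F i) G).toFun x

/-- Domination `τ₁ ≫ τ₂` of triangle functions. -/
def Dominates (τ₁ τ₂ : DistFun → DistFun → DistFun) : Prop :=
  ∀ F₁ F₂ G₁ G₂, τ₂ (τ₁ F₁ F₂) (τ₁ G₁ G₂) ≤ τ₁ (τ₂ F₁ G₁) (τ₂ F₂ G₂)

/-- A probabilistic pseudo-normed space `(V, ν, τ, τ*)`. -/
structure IsPPNSpace {V : Type*} [AddCommGroup V] [Module ℝ V]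
    (ν : V → DistFun) (τ τs : DistFun → DistFun → DistFun) : Prop where
  tri : IsTriangleFun τ
  tri_s : IsTriangleFun τs
  cont : TriCont τ
  cont_s : TriCont τs
  tau_le : ∀ F G, τ F G ≤ τs F G
  N1' : ν 0 = eps0
  N2 : ∀ p, ν (-p) = ν p
  N3 : ∀ p q, τ (ν p) (ν q) ≤ ν (p + q)
  N4 : ∀ (p : V) (α : ℝ), 0 ≤ α → α ≤ 1 →
    ν p ≤ τs (ν (α • p)) (ν ((1 - α) • p))

/-- A probabilistic normed space `(V, ν, τ, τ*)`. -/
structure IsPNSpace {V : Type*} [AddCommGroup V] [Module ℝ V]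
    (ν : V → DistFun) (τ τs : DistFun → DistFun → DistFun)
    extends IsPPNSpace ν τ τs : Prop where
  N1 : ∀ p, ν p = eps0 ↔ p = 0

/-- The strong topology of a PN space, generated by the strong neighbourhoods
`N_p(t) = {q : ν_{q-p}(t) > 1 - t}`. -/
def strongTop {V : Type*} [AddCommGroup V] (ν : V → DistFun) : TopologicalSpace V :=
  TopologicalSpace.generateFrom
    {S | ∃ (p : V) (t : ℝ), 0 < t ∧ S = {q | 1 - t < (ν (q - p)).toFun t}}

/-- A set is closed in the strong topology. -/
def StrongClosed {V : Type*} [AddCommGroup V] (ν : V → DistFun) (S : Set V) : Prop :=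
  @IsClosed V (strongTop ν) S

/-- A strong Cauchy sequence. -/
def StrongCauchy {V : Type*} [AddCommGroup V] (ν : V → DistFun) (p : ℕ → V) : Prop :=
  ∀ t : ℝ, 0 < t → ∃ N : ℕ, ∀ m n, N ≤ m → N ≤ n → 1 - t < (ν (p n - p m)).toFun t

/-- Strong convergence of a sequence to a point. -/
def StrongConv {V : Type*} [AddCommGroup V] (ν : V → DistFun) (p : ℕ → V) (x : V) : Prop :=
  ∀ t : ℝ, 0 < t → ∃ N : ℕ, ∀ n, N ≤ n → 1 - t < (ν (p n - x)).toFun t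

/-- Strong completeness. -/
def StrongComplete {V : Type*} [AddCommGroup V] (ν : V → DistFun) : Prop :=
  ∀ p : ℕ → V, StrongCauchy ν p → ∃ x, StrongConv ν p x

/-!
Since `ε₀` is the top of `Δ⁺`, `ν p = ε₀` amounts to `ε₀ ≤ ν p`. Closure under addition is
then `ε₀ = τ ε₀ ε₀ ≤ ν (p + q)`. For scalars, the axiom `ν_p ≤ τ*(ν_{αp}, ν_{(1-α)p})` together
with `τ* F G ≤ τ* F ε₀ = F` makes `α ↦ ν_{αp}` antitone in `|α|`, so `ν_{αp} ≥ ν_{np} = ε₀` for a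
natural number `n ≥ |α|`.
-/

namespace DistFun

theorem ext_toFun {F G : DistFun} (h : ∀ x, F.toFun x = G.toFun x) : F = G := by
  cases F; cases G
  simp only [DistFun.mk.injEq]
  exact funext h

theorem le_trans {F G H : DistFun} (hFG : F ≤ G) (hGH : G ≤ H) : F ≤ H :=
  fun x => (hFG x).trans (hGH x)

theorem le_eps0 (F : DistFun) : F ≤ eps0 := by
  intro x
  by_cases hx : x ≤ 0
  · simp [eps0, unitStep, hx, F.zero' x hx]
  · simp [eps0, unitStep, hx, F.le_one' x]

theorem eq_eps0_of_eps0_le {F : DistFun} (h : eps0 ≤ F) : F = eps0 :=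
  ext_toFun fun x => le_antisymm (le_eps0 F x) (h x)

end DistFun

open DistFun

theorem IsTriangleFun.le_left {τ : DistFun → DistFun → DistFun} (hτ : IsTriangleFun τ)
    (F G : DistFun) : τ F G ≤ F := by
  have h := hτ.mono G eps0 F (le_eps0 G)
  rwa [hτ.comm G, hτ.comm eps0, hτ.ident] at h

namespace IsPPNSpace

variable {V : Type*} [AddCommGroup V] [Module ℝ V] {ν : V → DistFun}
  {τ τs : DistFun → DistFun → DistFun}

theorem nu_add_eq_eps0 (h : IsPPNSpace ν τ τs) {p q : V} (hp : ν p = eps0) (hq : ν q = eps0) :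
    ν (p + q) = eps0 := by
  apply eq_eps0_of_eps0_le
  simpa only [hp, hq, h.tri.ident] using h.N3 p q

theorem nu_natCast_smul_eq_eps0 (h : IsPPNSpace ν τ τs) {p : V} (hp : ν p = eps0) (n : ℕ) :
    ν ((n : ℝ) • p) = eps0 := by
  induction n with
  | zero => rw [Nat.cast_zero, zero_smul, h.N1']
  | succ n ih => rw [Nat.cast_succ, add_smul, one_smul]; exact h.nu_add_eq_eps0 ih hp

theorem nu_smul_le_of_le (h : IsPPNSpace ν τ τs) (p : V) {α β : ℝ} (hα : 0 ≤ α)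
    (hαβ : α ≤ β) : ν (β • p) ≤ ν (α • p) := by
  rcases hαβ.eq_or_lt with rfl | hlt
  · exact fun _ => le_rfl
  have hβ : 0 < β := hα.trans_lt hlt
  have hsplit := h.N4 (β • p) (α / β) (div_nonneg hα hβ.le) ((div_le_one hβ).mpr hαβ)
  rw [smul_smul, smul_smul, div_mul_cancel₀ α hβ.ne'] at hsplit
  exact DistFun.le_trans hsplit (h.tri_s.le_left _ _)

theorem nu_abs_smul (h : IsPPNSpace ν τ τs) (p : V) (α : ℝ) : ν (|α| • p) = ν (α • p) := by
  rcases abs_choice α with hα | hα <;> rw [hα]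
  rw [neg_smul, h.N2]

theorem nu_smul_le_of_abs_le (h : IsPPNSpace ν τ τs) (p : V) {α β : ℝ} (hαβ : |α| ≤ |β|) :
    ν (β • p) ≤ ν (α • p) := by
  rw [← h.nu_abs_smul p α, ← h.nu_abs_smul p β]
  exact h.nu_smul_le_of_le p (abs_nonneg α) hαβ

end IsPPNSpace

theorem kernel_is_subspace {V : Type*} [AddCommGroup V] [Module ℝ V]
    (ν : V → DistFun) (τ τs : DistFun → DistFun → DistFun)
    (h : IsPPNSpace ν τ τs) :
    (∀ p q : V, ν p = eps0 → ν q = eps0 → ν (p + q) = eps0) ∧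
    (∀ (α : ℝ) (p : V), ν p = eps0 → ν (α • p) = eps0) := by
  refine ⟨fun p q hp hq => h.nu_add_eq_eps0 hp hq, fun α p hp => ?_⟩
  have hn : |α| ≤ |((⌈|α|⌉₊ : ℕ) : ℝ)| := by
    rw [Nat.abs_cast]
    exact Nat.le_ceil _
  apply eq_eps0_of_eps0_le
  rw [← h.nu_natCast_smul_eq_eps0 hp ⌈|α|⌉₊]
  exact h.nu_smul_le_of_abs_le p hn
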